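/- arXiv:2511.22160 — 4 statements merged into one kernel-verified Lean document; each statement's English description precedes it below -/
import Mathlib

section
/- Let A ∈ ℝ^{n×n}, B ∈ ℝ^{n×m}, let R ∈ ℝ^{m×m} be symmetric positive definite, S ∈ ℝ^{n×n} symmetric positive definite, c > 0 a scalar, and K ∈ ℝ^{m×n} such that c(A − BK) is Schur stable. Let P be the (unique, symmetric, positive definite) solution of the policy-evaluation equation c²(A − BK)ᵀ P (A − BK) − P = −(S + Kᵀ R K), and define the improved gain K' = c²(R + c² Bᵀ P B)^{-1} Bᵀ P A. Then c(A − BK') is also Schur stable, i.e. ρ(A − BK') < 1/c. -/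
open Matrix

/-- The spectral radius of a real square matrix: the maximum modulus of its
complex eigenvalues (supremum of moduli of elements of the complex spectrum). -/
noncomputable def specRad {n : ℕ} (M : Matrix (Fin n) (Fin n) ℝ) : ℝ :=
  sSup ((fun μ : ℂ => ‖μ‖) '' spectrum ℂ (M.map Complex.ofReal))

/-- A real square matrix is Schur stable if its spectral radius is `< 1`. -/
def SchurStable {n : ℕ} (M : Matrix (Fin n) (Fin n) ℝ) : Prop := specRad M < 1

/-- The real part of the complexified quadratic form of a real positive definite
matrix is positive on nonzero complex vectors. -/
lemma re_quad_pos {n : ℕ} (X : Matrix (Fin n) (Fin n) ℝ) (hX : X.PosDef) (v : Fin n → ℂ)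
    (hv : v ≠ 0) : 0 < ((star v) ⬝ᵥ ((X.map Complex.ofReal) *ᵥ v)).re := by
  set x : Fin n → ℝ := fun i => (v i).re with hx
  set y : Fin n → ℝ := fun i => (v i).im with hy
  have hre : ((star v) ⬝ᵥ ((X.map Complex.ofReal) *ᵥ v)).re
      = x ⬝ᵥ (X *ᵥ x) + y ⬝ᵥ (X *ᵥ y) := by
    simp only [dotProduct, mulVec, Matrix.map_apply, Pi.star_apply, Finset.mul_sum,
      Complex.re_sum]
    rw [← Finset.sum_add_distrib]
    refine Finset.sum_congr rfl fun i _ => ?_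
    rw [← Finset.sum_add_distrib]
    refine Finset.sum_congr rfl fun j _ => ?_
    simp only [Complex.mul_re, Complex.mul_im, Complex.ofReal_re, Complex.ofReal_im,
      RingHom.coe_coe, Complex.conj_re, Complex.conj_im, Complex.star_def, hx, hy]
    ring
  rw [hre]
  have hxy : x ≠ 0 ∨ y ≠ 0 := by
    by_contra h
    push_neg at h
    exact hv (funext fun i => Complex.ext (congrFun h.1 i) (congrFun h.2 i))
  rcases hxy with h | h
  · have h1 := hX.dotProduct_mulVec_pos h
    have h2 := hX.posSemidef.dotProduct_mulVec_nonneg y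
    simp only [star_trivial] at h1 h2
    linarith
  · have h1 := hX.dotProduct_mulVec_pos h
    have h2 := hX.posSemidef.dotProduct_mulVec_nonneg x
    simp only [star_trivial] at h1 h2
    linarith

/-- Each element of the complex spectrum of a matrix admits an eigenvector. -/
lemma exists_eigvec {n : ℕ} (N : Matrix (Fin n) (Fin n) ℂ) {μ : ℂ}
    (hμ : μ ∈ spectrum ℂ N) : ∃ v : Fin n → ℂ, v ≠ 0 ∧ N *ᵥ v = μ • v := by
  rw [spectrum.mem_iff] at hμ
  rw [Matrix.isUnit_iff_isUnit_det, isUnit_iff_ne_zero, not_not] at hμ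
  obtain ⟨v, hv0, hv⟩ := (Matrix.exists_mulVec_eq_zero_iff).mpr hμ
  refine ⟨v, hv0, ?_⟩
  have : (algebraMap ℂ (Matrix (Fin n) (Fin n) ℂ)) μ *ᵥ v - N *ᵥ v = 0 := by
    rw [← Matrix.sub_mulVec, hv]
  have h2 : (algebraMap ℂ (Matrix (Fin n) (Fin n) ℂ)) μ *ᵥ v = μ • v := by
    rw [Matrix.algebraMap_eq_diagonal]; funext i; simp [Matrix.mulVec_diagonal]
  rw [h2] at this
  rw [sub_eq_zero] at this
  exact this.symm

/-- Discrete-time Lyapunov criterion: if `MᵀPM - P = -Q` with `P, Q ≻ 0`,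
then `M` is Schur stable. -/
lemma lyapunov {n : ℕ} (M P Q : Matrix (Fin n) (Fin n) ℝ) (hP : P.PosDef) (hQ : Q.PosDef)
    (h : Mᵀ * P * M - P = -Q) : SchurStable M := by
  unfold SchurStable specRad
  set s := (fun μ : ℂ => ‖μ‖) '' spectrum ℂ (M.map Complex.ofReal) with hs
  have hfin : s.Finite := (Matrix.finite_spectrum _).image _
  rcases s.eq_empty_or_nonempty with he | hne
  · rw [he, Real.sSup_empty]; norm_num
  · rw [hfin.csSup_lt_iff hne]
    rintro r ⟨μ, hμ, rfl⟩
    obtain ⟨v, hv0, hv⟩ := exists_eigvec _ hμ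
    have hc : (M.map Complex.ofReal)ᵀ * (P.map Complex.ofReal) * (M.map Complex.ofReal)
        - (P.map Complex.ofReal) = -(Q.map Complex.ofReal) := by
      ext i j
      have := congrArg (fun X : Matrix (Fin n) (Fin n) ℝ => X i j) h
      simp only [Matrix.sub_apply, Matrix.neg_apply, Matrix.mul_apply, Matrix.map_apply,
        Matrix.transpose_apply] at this ⊢
      exact_mod_cast congrArg (Complex.ofReal) this
    set Nc := M.map Complex.ofReal with hNc
    set Pc := P.map Complex.ofReal with hPc
    set Qc := Q.map Complex.ofReal with hQc
    have hstar : Nc *ᵥ star v = star (Nc *ᵥ v) := by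
      funext i
      simp only [Matrix.mulVec, dotProduct, Pi.star_apply, hNc, Matrix.map_apply]
      rw [star_sum]
      refine Finset.sum_congr rfl fun j _ => ?_
      rw [star_mul']
      simp [Complex.star_def, Complex.conj_ofReal]
    have step1 : star v ⬝ᵥ ((Ncᵀ * Pc * Nc) *ᵥ v)
        = (starRingEnd ℂ μ * μ) * (star v ⬝ᵥ (Pc *ᵥ v)) := by
      rw [Matrix.mul_assoc, ← Matrix.mulVec_mulVec, Matrix.dotProduct_mulVec,
        Matrix.vecMul_transpose, hstar, hv, ← Matrix.mulVec_mulVec, hv, Matrix.mulVec_smul,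
        star_smul, smul_dotProduct, dotProduct_smul]
      simp only [smul_eq_mul, Complex.star_def]
      ring
    have hq := congrArg (fun X : Matrix (Fin n) (Fin n) ℂ => star v ⬝ᵥ (X *ᵥ v)) hc
    simp only [Matrix.sub_mulVec, Matrix.neg_mulVec, dotProduct_sub, dotProduct_neg,
      step1] at hq
    have hqre := congrArg Complex.re hq
    have hcm : (starRingEnd ℂ μ * μ) = ((Complex.normSq μ : ℝ) : ℂ) := by
      rw [mul_comm, Complex.mul_conj]
    rw [hcm] at hqre
    simp only [Complex.sub_re, Complex.neg_re, Complex.re_ofReal_mul] at hqre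
    have hPre := re_quad_pos P hP v hv0
    have hQre := re_quad_pos Q hQ v hv0
    rw [← hPc] at hPre
    rw [← hQc] at hQre
    have habs : Complex.normSq μ < 1 := by nlinarith
    have : (‖μ‖) ^ 2 < 1 := by rw [Complex.sq_norm]; exact habs
    show ‖μ‖ < 1
    nlinarith [norm_nonneg μ]

/-- A nonnegative scalar multiple of a positive semidefinite real matrix is
positive semidefinite. -/
lemma psd_smul {n : ℕ} {X : Matrix (Fin n) (Fin n) ℝ} (hX : X.PosSemidef) {r : ℝ} (hr : 0 ≤ r) :
    (r • X).PosSemidef := by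
  refine Matrix.PosSemidef.of_dotProduct_mulVec_nonneg ?_ ?_
  · unfold Matrix.IsHermitian
    rw [Matrix.conjTranspose_smul, hX.1]
    norm_num
  · intro x
    rw [Matrix.smul_mulVec, dotProduct_smul, smul_eq_mul]
    exact mul_nonneg hr (hX.dotProduct_mulVec_nonneg x)

/-- The completion-of-squares identity underlying the policy improvement step. -/
lemma key_alg {n m : ℕ} (A' : Matrix (Fin n) (Fin n) ℝ) (B' : Matrix (Fin n) (Fin m) ℝ)
    (P S : Matrix (Fin n) (Fin n) ℝ) (R : Matrix (Fin m) (Fin m) ℝ)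
    (K K' : Matrix (Fin m) (Fin n) ℝ) (hPs : Pᵀ = P) (hRs : Rᵀ = R)
    (h1 : B'ᵀ * P * A' = R * K' + B'ᵀ * P * B' * K') :
    (A' - B'*K')ᵀ * P * (A' - B'*K') - ((A' - B'*K)ᵀ * P * (A' - B'*K) + (S + Kᵀ*R*K))
      = -(S + K'ᵀ*R*K' + (K - K')ᵀ * (R + B'ᵀ*P*B') * (K - K')) := by
  have cert : (A' - B'*K')ᵀ * P * (A' - B'*K') - ((A' - B'*K)ᵀ * P * (A' - B'*K) + (S + Kᵀ*R*K))
      + (S + K'ᵀ*R*K' + (K - K')ᵀ * (R + B'ᵀ*P*B') * (K - K'))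
      = (K - K')ᵀ * (B'ᵀ*P*A' - (R*K' + B'ᵀ*P*B'*K'))
        + (B'ᵀ*P*A' - (R*K' + B'ᵀ*P*B'*K'))ᵀ * (K - K') := by
    simp only [Matrix.transpose_sub, Matrix.transpose_mul, Matrix.transpose_add,
      Matrix.transpose_transpose, hPs, hRs]
    simp only [Matrix.sub_mul, Matrix.mul_sub, Matrix.add_mul, Matrix.mul_add, Matrix.mul_assoc]
    abel
  rw [h1, sub_self, Matrix.mul_zero, Matrix.transpose_zero, Matrix.zero_mul, add_zero] at cert
  exact eq_neg_of_add_eq_zero_left cert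

theorem stmt_4 {n m : ℕ} (A : Matrix (Fin n) (Fin n) ℝ) (B : Matrix (Fin n) (Fin m) ℝ)
    (R : Matrix (Fin m) (Fin m) ℝ) (S : Matrix (Fin n) (Fin n) ℝ)
    (c : ℝ) (K : Matrix (Fin m) (Fin n) ℝ)
    (hR : R.PosDef) (hS : S.PosDef) (hc : 0 < c)
    (hK : SchurStable (c • (A - B * K)))
    (P : Matrix (Fin n) (Fin n) ℝ) (hPsymm : P.IsSymm) (hPpos : P.PosDef)
    (heq : (c ^ 2) • ((A - B * K)ᵀ * P * (A - B * K)) - P = -(S + Kᵀ * R * K))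
    (K' : Matrix (Fin m) (Fin n) ℝ)
    (hK' : K' = (c ^ 2) • ((R + (c ^ 2) • (Bᵀ * P * B))⁻¹ * (Bᵀ * P * A))) :
    SchurStable (c • (A - B * K')) := by
  have hPs : Pᵀ = P := hPsymm
  have hRs : Rᵀ = R := by
    rw [← Matrix.conjTranspose_eq_transpose_of_trivial]; exact hR.1
  -- smul conversions
  have quad : ∀ (p q : ℕ) (X : Matrix (Fin n) (Fin p) ℝ) (Y : Matrix (Fin n) (Fin q) ℝ),
      (c • X)ᵀ * P * (c • Y) = (c ^ 2) • (Xᵀ * P * Y) := by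
    intro p q X Y
    rw [Matrix.transpose_smul, Matrix.smul_mul, Matrix.mul_smul, Matrix.smul_mul,
      smul_smul, pow_two]
  have e1 : (c • B)ᵀ * P * (c • A) = (c ^ 2) • (Bᵀ * P * A) := quad _ _ B A
  have e2 : (c • B)ᵀ * P * (c • B) = (c ^ 2) • (Bᵀ * P * B) := quad _ _ B B
  -- BᵀPB positive semidefinite (scaled)
  have hBPB : ((c ^ 2) • (Bᵀ * P * B)).PosSemidef := by
    have h0 : (Bᵀ * P * B).PosSemidef := by
      have := hPpos.posSemidef.conjTranspose_mul_mul_same B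
      rwa [Matrix.conjTranspose_eq_transpose_of_trivial] at this
    exact psd_smul h0 (by positivity)
  have hG : (R + (c ^ 2) • (Bᵀ * P * B)).PosDef := hR.add_posSemidef hBPB
  have hGdet : IsUnit (R + (c ^ 2) • (Bᵀ * P * B)).det := hG.det_pos.ne'.isUnit
  have h1' : (R + (c ^ 2) • (Bᵀ * P * B)) * K' = (c ^ 2) • (Bᵀ * P * A) := by
    rw [hK', Matrix.mul_smul, Matrix.mul_nonsing_inv_cancel_left _ _ hGdet]
  have h1 : (c • B)ᵀ * P * (c • A) = R * K' + (c • B)ᵀ * P * (c • B) * K' := by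
    rw [e1, e2, ← h1', Matrix.add_mul]
  have key := key_alg (c • A) (c • B) P S R K K' hPs hRs h1
  -- policy evaluation rearranged
  have hPeq : P = (c • A - (c • B) * K)ᵀ * P * (c • A - (c • B) * K) + (S + Kᵀ * R * K) := by
    have e3 : (c • A - (c • B) * K)ᵀ * P * (c • A - (c • B) * K)
        = (c ^ 2) • ((A - B * K)ᵀ * P * (A - B * K)) := by
      rw [Matrix.smul_mul, ← smul_sub, quad _ _ (A - B * K) (A - B * K)]
    rw [e3]
    have h := heq
    rw [sub_eq_iff_eq_add] at h
    rw [h]; abel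
  rw [← hPeq] at key
  have e4 : c • A - (c • B) * K' = c • (A - B * K') := by
    rw [Matrix.smul_mul, smul_sub]
  rw [e4] at key
  -- the increment is positive definite
  have hDelta : (S + K'ᵀ*R*K' + (K - K')ᵀ * (R + (c • B)ᵀ*P*(c • B)) * (K - K')).PosDef := by
    have p1 : (K'ᵀ*R*K').PosSemidef := by
      have := hR.posSemidef.conjTranspose_mul_mul_same K'
      rwa [Matrix.conjTranspose_eq_transpose_of_trivial] at this
    have p2 : ((K - K')ᵀ * (R + (c • B)ᵀ*P*(c • B)) * (K - K')).PosSemidef := by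
      rw [e2]
      have := hG.posSemidef.conjTranspose_mul_mul_same (K - K')
      rwa [Matrix.conjTranspose_eq_transpose_of_trivial] at this
    exact (hS.add_posSemidef p1).add_posSemidef p2
  exact lyapunov _ P _ hPpos hDelta key
end

section
/- Let A ∈ ℝ^{n×n}, B ∈ ℝ^{n×m}, R ∈ ℝ^{m×m} symmetric positive definite, S ∈ ℝ^{n×n} symmetric positive definite, c > 0, and K ∈ ℝ^{m×n} with c(A − BK) Schur stable. Let P solve c²(A − BK)ᵀ P (A − BK) − P = −(S + Kᵀ R K), let K' = c²(R + c² Bᵀ P B)^{-1} Bᵀ P A, and let P' be the symmetric solution of c²(A − BK')ᵀ P' (A − BK') − P' = −(S + K'ᵀ R K'). Then 0 ≺ P' ⪯ P in the Löwner order. -/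
open Matrix

open Filter
open scoped ENNReal NNReal

lemma pow_entry_tendsto_zero {n : ℕ} {M : Matrix (Fin n) (Fin n) ℝ} (hM : SchurStable M)
    (i j : Fin n) : Tendsto (fun N : ℕ => (M ^ N) i j) atTop (nhds 0) := by
  letI : NormedRing (Matrix (Fin n) (Fin n) ℂ) := Matrix.linftyOpNormedRing
  letI : NormedAlgebra ℂ (Matrix (Fin n) (Fin n) ℂ) := Matrix.linftyOpNormedAlgebra
  letI : CompleteSpace (Matrix (Fin n) (Fin n) ℂ) := FiniteDimensional.complete ℂ _
  set Mc : Matrix (Fin n) (Fin n) ℂ := M.map Complex.ofReal with hMc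
  have hpow : ∀ N : ℕ, Mc ^ N = (M ^ N).map Complex.ofReal := by
    intro N
    have := map_pow (Complex.ofRealHom.mapMatrix :
      Matrix (Fin n) (Fin n) ℝ →+* Matrix (Fin n) (Fin n) ℂ) M N
    exact this.symm
  have hsr : spectralRadius ℂ Mc < 1 := by
    have hle : spectralRadius ℂ Mc ≤ ENNReal.ofReal (specRad M) := by
      rw [spectralRadius]
      refine iSup₂_le fun k hk => ?_
      have hb : ‖k‖ ≤ specRad M := by
        refine le_csSup (((Matrix.finite_spectrum Mc).image _).bddAbove) ?_
        exact ⟨k, hk, rfl⟩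
      rw [← ENNReal.ofReal_coe_nnreal, coe_nnnorm]
      exact ENNReal.ofReal_le_ofReal (by simpa using hb)
    exact lt_of_le_of_lt hle (by simpa using ENNReal.ofReal_lt_one.mpr hM)
  obtain ⟨r, hr1, hr2⟩ := ENNReal.lt_iff_exists_nnreal_btwn.mp hsr
  have hr2' : (r : ℝ) < 1 := by
    have : (r : ℝ≥0) < 1 := by exact_mod_cast hr2
    exact_mod_cast this
  have hg := spectrum.pow_nnnorm_pow_one_div_tendsto_nhds_spectralRadius Mc
  have hev : ∀ᶠ N : ℕ in atTop, (‖Mc ^ N‖₊ : ℝ≥0∞) ^ (1 / (N : ℝ)) < (r : ℝ≥0∞) :=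
    hg.eventually_lt_const hr1
  have hbound : ∀ᶠ N : ℕ in atTop, ‖(M ^ N) i j‖ ≤ (r : ℝ) ^ N := by
    filter_upwards [hev, eventually_ge_atTop 1] with N hN hN1
    have hNpos : (0 : ℝ) < N := by exact_mod_cast hN1
    have h1 : (‖Mc ^ N‖₊ : ℝ≥0∞) < (r : ℝ≥0∞) ^ (N : ℕ) := by
      calc (‖Mc ^ N‖₊ : ℝ≥0∞) = ((‖Mc ^ N‖₊ : ℝ≥0∞) ^ (1 / (N : ℝ))) ^ (N : ℝ) := by
            rw [← ENNReal.rpow_mul,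
              one_div_mul_cancel (by positivity : (N : ℝ) ≠ 0), ENNReal.rpow_one]
        _ < (r : ℝ≥0∞) ^ (N : ℝ) := ENNReal.rpow_lt_rpow hN hNpos
        _ = (r : ℝ≥0∞) ^ (N : ℕ) := ENNReal.rpow_natCast _ _
    have h2 : ‖Mc ^ N‖₊ ≤ r ^ N := by
      have := h1.le
      rw [← ENNReal.coe_pow, ENNReal.coe_le_coe] at this
      exact this
    have h3 : ‖(Mc ^ N) i j‖₊ ≤ ‖Mc ^ N‖₊ := by
      rw [Matrix.linfty_opNNNorm_def]
      exact le_trans (Finset.single_le_sum (f := fun j' => ‖(Mc ^ N) i j'‖₊)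
        (fun _ _ => zero_le) (Finset.mem_univ j)) (Finset.le_sup (f := fun i' => ∑ j' : Fin n, ‖(Mc ^ N) i' j'‖₊) (Finset.mem_univ i))
    have h4 : ‖(M ^ N) i j‖ = ‖(Mc ^ N) i j‖ := by
      rw [hpow]; simp [Matrix.map_apply]
    rw [h4]
    calc ‖(Mc ^ N) i j‖ ≤ ‖Mc ^ N‖ := by exact_mod_cast h3
      _ ≤ (r : ℝ) ^ N := by exact_mod_cast h2
  exact squeeze_zero_norm' hbound (tendsto_pow_atTop_nhds_zero_of_lt_one r.2 hr2')

lemma lyap_quad_ge {n : ℕ} {M X Q : Matrix (Fin n) (Fin n) ℝ}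
    (hM : SchurStable M) (h : Mᵀ * X * M - X = -Q)
    (hQ : ∀ y : Fin n → ℝ, 0 ≤ y ⬝ᵥ (Q *ᵥ y)) (x : Fin n → ℝ) :
    x ⬝ᵥ (Q *ᵥ x) ≤ x ⬝ᵥ (X *ᵥ x) := by
  have hX : X = Q + Mᵀ * X * M := by
    rw [sub_eq_iff_eq_add] at h; rw [h]; abel
  have step : ∀ y : Fin n → ℝ,
      y ⬝ᵥ (X *ᵥ y) = y ⬝ᵥ (Q *ᵥ y) + (M *ᵥ y) ⬝ᵥ (X *ᵥ (M *ᵥ y)) := by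
    intro y
    conv_lhs => rw [hX]
    rw [add_mulVec, dotProduct_add]
    congr 1
    rw [← Matrix.mulVec_mulVec, ← Matrix.mulVec_mulVec, Matrix.dotProduct_mulVec y Mᵀ,
      Matrix.vecMul_transpose]
  have main : ∀ N : ℕ, x ⬝ᵥ (X *ᵥ x) =
      (∑ k ∈ Finset.range N, ((M ^ k) *ᵥ x) ⬝ᵥ (Q *ᵥ ((M ^ k) *ᵥ x)))
        + ((M ^ N) *ᵥ x) ⬝ᵥ (X *ᵥ ((M ^ N) *ᵥ x)) := by
    intro N
    induction N with
    | zero => simp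
    | succ N ih =>
      have hMv : M *ᵥ ((M ^ N) *ᵥ x) = (M ^ (N + 1)) *ᵥ x := by
        rw [Matrix.mulVec_mulVec, ← pow_succ']
      rw [Finset.sum_range_succ, ih, step ((M ^ N) *ᵥ x), hMv]
      ring
  have hvec : ∀ i : Fin n, Filter.Tendsto (fun N : ℕ => ((M ^ N) *ᵥ x) i) Filter.atTop (nhds 0) := by
    intro i
    have : ∀ N : ℕ, ((M ^ N) *ᵥ x) i = ∑ j, (M ^ N) i j * x j := fun N => rfl
    simp only [this]
    have := Filter.Tendsto.congr' (Filter.Eventually.of_forall fun N => rfl)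
      (tendsto_finset_sum Finset.univ
        (fun j _ => (pow_entry_tendsto_zero hM i j).mul_const (x j)))
    simpa using this
  have htail : Filter.Tendsto
      (fun N : ℕ => ((M ^ N) *ᵥ x) ⬝ᵥ (X *ᵥ ((M ^ N) *ᵥ x))) Filter.atTop (nhds 0) := by
    have hrw : ∀ N : ℕ, ((M ^ N) *ᵥ x) ⬝ᵥ (X *ᵥ ((M ^ N) *ᵥ x))
        = ∑ i, ((M ^ N) *ᵥ x) i * (∑ j, X i j * ((M ^ N) *ᵥ x) j) := fun N => rfl
    simp only [hrw]
    have := tendsto_finset_sum (Finset.univ (α := Fin n)) (fun i _ =>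
      (hvec i).mul (tendsto_finset_sum Finset.univ
        (fun j _ => ((hvec j).const_mul (X i j)))))
    simpa using this
  have hle : ∀ᶠ N : ℕ in Filter.atTop,
      x ⬝ᵥ (Q *ᵥ x) + ((M ^ N) *ᵥ x) ⬝ᵥ (X *ᵥ ((M ^ N) *ᵥ x)) ≤ x ⬝ᵥ (X *ᵥ x) := by
    filter_upwards [Filter.eventually_ge_atTop 1] with N hN
    rw [main N]
    have hsum : x ⬝ᵥ (Q *ᵥ x) ≤
        ∑ k ∈ Finset.range N, ((M ^ k) *ᵥ x) ⬝ᵥ (Q *ᵥ ((M ^ k) *ᵥ x)) := by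
      have h0 : ((M ^ 0) *ᵥ x) ⬝ᵥ (Q *ᵥ ((M ^ 0) *ᵥ x)) = x ⬝ᵥ (Q *ᵥ x) := by simp
      calc x ⬝ᵥ (Q *ᵥ x) = ((M ^ 0) *ᵥ x) ⬝ᵥ (Q *ᵥ ((M ^ 0) *ᵥ x)) := h0.symm
        _ ≤ _ := Finset.single_le_sum (f := fun k => ((M ^ k) *ᵥ x) ⬝ᵥ (Q *ᵥ ((M ^ k) *ᵥ x)))
            (fun k _ => hQ _) (Finset.mem_range.mpr hN)
    linarith
  have := le_of_tendsto (f := fun N : ℕ =>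
      x ⬝ᵥ (Q *ᵥ x) + ((M ^ N) *ᵥ x) ⬝ᵥ (X *ᵥ ((M ^ N) *ᵥ x)))
    (by simpa using (tendsto_const_nhds (x := x ⬝ᵥ (Q *ᵥ x))).add htail) hle
  simpa using this

lemma isHermitian_of_isSymm {n : ℕ} {X : Matrix (Fin n) (Fin n) ℝ} (h : X.IsSymm) :
    X.IsHermitian := by
  rw [Matrix.IsHermitian, Matrix.conjTranspose_eq_transpose_of_trivial]; exact h

lemma lyap_posDef {n : ℕ} {M X Q : Matrix (Fin n) (Fin n) ℝ}
    (hM : SchurStable M) (h : Mᵀ * X * M - X = -Q)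
    (hQ : Q.PosDef) (hXs : X.IsSymm) : X.PosDef := by
  refine Matrix.PosDef.of_dotProduct_mulVec_pos (isHermitian_of_isSymm hXs) fun x hx => ?_
  have h1 := hQ.dotProduct_mulVec_pos hx
  have h2 := lyap_quad_ge hM h (fun y => by simpa using hQ.posSemidef.dotProduct_mulVec_nonneg y) x
  simp only [star_trivial] at h1 ⊢
  linarith

lemma lyap_posSemidef {n : ℕ} {M X Q : Matrix (Fin n) (Fin n) ℝ}
    (hM : SchurStable M) (h : Mᵀ * X * M - X = -Q)
    (hQ : Q.PosSemidef) (hXs : X.IsSymm) : X.PosSemidef := by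
  refine Matrix.PosSemidef.of_dotProduct_mulVec_nonneg (isHermitian_of_isSymm hXs) fun x => ?_
  have h2 := lyap_quad_ge hM h (fun y => by simpa using hQ.dotProduct_mulVec_nonneg y) x
  have h1 := hQ.dotProduct_mulVec_nonneg x
  simp only [star_trivial] at h1 ⊢
  linarith

lemma quad_complexify {n : ℕ} {X : Matrix (Fin n) (Fin n) ℝ} (hX : X.PosDef)
    {v : Fin n → ℂ} (hv : v ≠ 0) :
    ∃ t : ℝ, 0 < t ∧ star v ⬝ᵥ ((X.map Complex.ofReal) *ᵥ v) = (t : ℂ) := by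
  set a : Fin n → ℝ := fun i => (v i).re with ha
  set b : Fin n → ℝ := fun i => (v i).im with hb
  have hXs : ∀ i j, X j i = X i j := fun i j => by
    have := congrFun (congrFun hX.isHermitian j) i
    simpa [Matrix.conjTranspose_apply] using this.symm
  have hexp : star v ⬝ᵥ ((X.map Complex.ofReal) *ᵥ v)
      = ∑ i, ∑ j, (starRingEnd ℂ) (v i) * ((X i j : ℂ) * v j) := by
    simp [dotProduct, Matrix.mulVec, Finset.mul_sum, Matrix.map_apply]
  have hre : (star v ⬝ᵥ ((X.map Complex.ofReal) *ᵥ v)).re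
      = a ⬝ᵥ (X *ᵥ a) + b ⬝ᵥ (X *ᵥ b) := by
    rw [hexp]
    rw [Complex.re_sum]
    have hterm : ∀ i j : Fin n, ((starRingEnd ℂ) (v i) * ((X i j : ℂ) * v j)).re
        = a i * (X i j * a j) + b i * (X i j * b j) := by
      intro i j
      simp only [Complex.mul_re, Complex.mul_im, Complex.conj_re, Complex.conj_im,
        Complex.ofReal_re, Complex.ofReal_im, ha, hb]
      ring
    calc (∑ i, (∑ j, (starRingEnd ℂ) (v i) * ((X i j : ℂ) * v j)).re)
        = ∑ i, ∑ j, (a i * (X i j * a j) + b i * (X i j * b j)) := by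
          refine Finset.sum_congr rfl fun i _ => ?_
          rw [Complex.re_sum]
          exact Finset.sum_congr rfl fun j _ => hterm i j
      _ = a ⬝ᵥ (X *ᵥ a) + b ⬝ᵥ (X *ᵥ b) := by
          simp [dotProduct, Matrix.mulVec, Finset.mul_sum, Finset.sum_add_distrib]
  have him : (star v ⬝ᵥ ((X.map Complex.ofReal) *ᵥ v)).im = 0 := by
    rw [hexp]
    rw [Complex.im_sum]
    have hterm : ∀ i j : Fin n, ((starRingEnd ℂ) (v i) * ((X i j : ℂ) * v j)).im
        = X i j * (a i * b j) - X i j * (b i * a j) := by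
      intro i j
      simp only [Complex.mul_re, Complex.mul_im, Complex.conj_re, Complex.conj_im,
        Complex.ofReal_re, Complex.ofReal_im, ha, hb]
      ring
    have : (∑ i, (∑ j, (starRingEnd ℂ) (v i) * ((X i j : ℂ) * v j)).im)
        = (∑ i, ∑ j, X i j * (a i * b j)) - (∑ i, ∑ j, X i j * (b i * a j)) := by
      rw [← Finset.sum_sub_distrib]
      refine Finset.sum_congr rfl fun i _ => ?_
      rw [Complex.im_sum, ← Finset.sum_sub_distrib]
      exact Finset.sum_congr rfl fun j _ => hterm i j
    rw [this]
    have swap : (∑ i, ∑ j, X i j * (a i * b j)) = ∑ i, ∑ j, X i j * (b i * a j) := by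
      rw [Finset.sum_comm]
      exact Finset.sum_congr rfl fun i _ => Finset.sum_congr rfl fun j _ => by
        rw [hXs i j]; ring
    rw [swap, sub_self]
  have hab : a ≠ 0 ∨ b ≠ 0 := by
    by_contra hcon
    push_neg at hcon
    apply hv
    funext i
    have h1 : a i = 0 := by rw [hcon.1]; rfl
    have h2 : b i = 0 := by rw [hcon.2]; rfl
    exact Complex.ext (by simpa [ha] using h1) (by simpa [hb] using h2)
  have hapsd : 0 ≤ a ⬝ᵥ (X *ᵥ a) := by simpa using hX.posSemidef.dotProduct_mulVec_nonneg a
  have hbpsd : 0 ≤ b ⬝ᵥ (X *ᵥ b) := by simpa using hX.posSemidef.dotProduct_mulVec_nonneg b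
  have hpos : 0 < a ⬝ᵥ (X *ᵥ a) + b ⬝ᵥ (X *ᵥ b) := by
    rcases hab with hne | hne
    · have := hX.dotProduct_mulVec_pos hne; simp only [star_trivial] at this; linarith
    · have := hX.dotProduct_mulVec_pos hne; simp only [star_trivial] at this; linarith
  exact ⟨_, hpos, Complex.ext (by simpa using hre) (by simpa using him)⟩

lemma schurStable_of_lyap {n : ℕ} {M X Q : Matrix (Fin n) (Fin n) ℝ}
    (hX : X.PosDef) (hQ : Q.PosDef) (h : Mᵀ * X * M - X = -Q) : SchurStable M := by
  classical
  set Mc : Matrix (Fin n) (Fin n) ℂ := M.map Complex.ofReal with hMcdef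
  unfold SchurStable specRad
  rcases ((fun μ : ℂ => ‖μ‖) '' spectrum ℂ (M.map Complex.ofReal)).eq_empty_or_nonempty
    with hs | hs
  · rw [hs, Real.sSup_empty]; norm_num
  · have hfin : ((fun μ : ℂ => ‖μ‖) '' spectrum ℂ (M.map Complex.ofReal)).Finite :=
      (Matrix.finite_spectrum _).image _
    obtain ⟨μ, hμ, hμe⟩ := hs.csSup_mem hfin
    rw [← hμe]
    -- eigenvector
    have hμ' : μ ∈ spectrum ℂ (Matrix.toLinAlgEquiv' Mc) := by
      rw [AlgEquiv.spectrum_eq]; exact hμ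
    have hev : Module.End.HasEigenvalue (Matrix.toLinAlgEquiv' Mc) μ :=
      Module.End.HasEigenvalue.of_mem_spectrum hμ'
    obtain ⟨v, hvv⟩ := hev.exists_hasEigenvector
    have hMv : Mc *ᵥ v = μ • v := by
      have := hvv.apply_eq_smul
      rwa [Matrix.toLinAlgEquiv'_apply] at this
    have hv0 : v ≠ 0 := hvv.right
    -- complexify the Lyapunov equation
    have hMcH : Mcᵀ = Mcᴴ := by
      ext i j
      simp [Matrix.conjTranspose_apply, Matrix.transpose_apply, hMcdef, Matrix.map_apply,
        Complex.conj_ofReal]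
    have hC : Mcᵀ * (X.map Complex.ofReal) * Mc - X.map Complex.ofReal
        = -(Q.map Complex.ofReal) := by
      have := congrArg (Complex.ofRealHom.mapMatrix :
        Matrix (Fin n) (Fin n) ℝ →+* Matrix (Fin n) (Fin n) ℂ) h
      simp only [map_sub, _root_.map_mul, map_neg, RingHom.mapMatrix_apply, Matrix.map_mul] at this
      have hcoe : ∀ Y : Matrix (Fin n) (Fin n) ℝ,
          Y.map ⇑Complex.ofRealHom = Y.map Complex.ofReal := fun _ => rfl
      rw [hcoe, hcoe, hcoe] at this
      rw [hMcdef, ← Matrix.transpose_map]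
      exact this
    obtain ⟨tX, htX, hqX⟩ := quad_complexify hX hv0
    obtain ⟨tQ, htQ, hqQ⟩ := quad_complexify hQ hv0
    have hscal := congrArg (fun Y : Matrix (Fin n) (Fin n) ℂ => star v ⬝ᵥ (Y *ᵥ v)) hC
    simp only [Matrix.sub_mulVec, Matrix.neg_mulVec, dotProduct_sub, dotProduct_neg] at hscal
    have hkey : star v ⬝ᵥ ((Mcᵀ * (X.map Complex.ofReal) * Mc) *ᵥ v)
        = (starRingEnd ℂ) μ * (μ * (star v ⬝ᵥ ((X.map Complex.ofReal) *ᵥ v))) := by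
      rw [← Matrix.mulVec_mulVec, ← Matrix.mulVec_mulVec,
        Matrix.dotProduct_mulVec (star v) Mcᵀ, hMcH, ← Matrix.star_mulVec, hMv,
        Matrix.mulVec_smul, star_smul, smul_dotProduct, dotProduct_smul]
      simp [smul_eq_mul, mul_assoc]
    rw [hkey, hqX, hqQ] at hscal
    have hconj : (starRingEnd ℂ) μ * (μ * (tX : ℂ)) = ((Complex.normSq μ : ℝ) : ℂ) * (tX : ℂ) := by
      rw [← mul_assoc, Complex.normSq_eq_conj_mul_self]
    rw [hconj] at hscal
    have hreal : Complex.normSq μ * tX - tX = -tQ := by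
      have : ((Complex.normSq μ * tX - tX : ℝ) : ℂ) = ((-tQ : ℝ) : ℂ) := by push_cast; exact hscal
      exact_mod_cast this
    have habs := Complex.sq_norm μ
    have hnn := norm_nonneg μ
    nlinarith [sq_nonneg (‖μ‖ - 1)]

theorem stmt_5 {n m : ℕ} (A : Matrix (Fin n) (Fin n) ℝ) (B : Matrix (Fin n) (Fin m) ℝ)
    (R : Matrix (Fin m) (Fin m) ℝ) (S : Matrix (Fin n) (Fin n) ℝ)
    (c : ℝ) (K : Matrix (Fin m) (Fin n) ℝ)
    (hR : R.PosDef) (hS : S.PosDef) (hc : 0 < c)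
    (hK : SchurStable (c • (A - B * K)))
    (P : Matrix (Fin n) (Fin n) ℝ) (hPsymm : P.IsSymm)
    (heq : (c ^ 2) • ((A - B * K)ᵀ * P * (A - B * K)) - P = -(S + Kᵀ * R * K))
    (K' : Matrix (Fin m) (Fin n) ℝ)
    (hK' : K' = (c ^ 2) • ((R + (c ^ 2) • (Bᵀ * P * B))⁻¹ * (Bᵀ * P * A)))
    (P' : Matrix (Fin n) (Fin n) ℝ) (hP'symm : P'.IsSymm)
    (heq' : (c ^ 2) • ((A - B * K')ᵀ * P' * (A - B * K')) - P' = -(S + K'ᵀ * R * K')) :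
    P'.PosDef ∧ (P - P').PosSemidef := by
  classical
  have psd_conj : ∀ {p q : ℕ} (W : Matrix (Fin p) (Fin q) ℝ) (Y : Matrix (Fin p) (Fin p) ℝ),
      Y.PosSemidef → (Wᵀ * Y * W).PosSemidef := by
    intro p q W Y hY
    have := hY.conjTranspose_mul_mul_same W
    rwa [Matrix.conjTranspose_eq_transpose_of_trivial] at this
  set Ac := c • A with hAcdef
  set Bc := c • B with hBcdef
  set M := c • (A - B * K) with hMdef
  set M' := c • (A - B * K') with hM'def
  have hsq : ∀ (Y : Matrix (Fin n) (Fin n) ℝ) (L : Matrix (Fin m) (Fin n) ℝ),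
      (c • (A - B * L))ᵀ * Y * (c • (A - B * L))
        = (c ^ 2) • ((A - B * L)ᵀ * Y * (A - B * L)) := by
    intro Y L
    simp [Matrix.transpose_smul, Matrix.smul_mul, Matrix.mul_smul, smul_smul, pow_two]
  have hP : Mᵀ * P * M - P = -(S + Kᵀ * R * K) := by
    rw [hMdef, hsq P K]; exact heq
  have hP' : M'ᵀ * P' * M' - P' = -(S + K'ᵀ * R * K') := by
    rw [hM'def, hsq P' K']; exact heq'
  have hMac : M = Ac - Bc * K := by
    rw [hMdef, hAcdef, hBcdef, smul_sub, Matrix.smul_mul]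
  have hM'ac : M' = Ac - Bc * K' := by
    rw [hM'def, hAcdef, hBcdef, smul_sub, Matrix.smul_mul]
  have hQ1 : (S + Kᵀ * R * K).PosDef := hS.add_posSemidef (psd_conj K R hR.posSemidef)
  have hPpd : P.PosDef := lyap_posDef hK hP hQ1 hPsymm
  set G := R + Bcᵀ * P * Bc with hGdef
  have hGpd : G.PosDef := hR.add_posSemidef (psd_conj Bc P hPpd.posSemidef)
  have hGsymm : Gᵀ = G := by
    have := hGpd.isHermitian
    rwa [Matrix.IsHermitian, Matrix.conjTranspose_eq_transpose_of_trivial] at this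
  have hPsym' : Pᵀ = P := hPsymm
  have hGeq : G = R + (c ^ 2) • (Bᵀ * P * B) := by
    rw [hGdef, hBcdef]
    congr 1
    simp [Matrix.transpose_smul, Matrix.smul_mul, Matrix.mul_smul, smul_smul, pow_two]
  have hdetG : IsUnit G.det := Matrix.isUnit_iff_isUnit_det _ |>.mp hGpd.isUnit
  have hK'G : G * K' = Bcᵀ * P * Ac := by
    rw [hK', ← hGeq, Matrix.mul_smul, ← Matrix.mul_assoc,
      Matrix.mul_nonsing_inv _ hdetG, Matrix.one_mul, hAcdef, hBcdef]
    simp [Matrix.transpose_smul, Matrix.smul_mul, Matrix.mul_smul, smul_smul, pow_two]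
  have hGK'T : K'ᵀ * G = Acᵀ * P * Bc := by
    have h := congrArg Matrix.transpose hK'G
    simp only [Matrix.transpose_mul, Matrix.transpose_transpose, hGsymm, hPsym',
      Matrix.mul_assoc] at h
    simp only [Matrix.mul_assoc]
    exact h
  have complete_square : ∀ L : Matrix (Fin m) (Fin n) ℝ,
      (Ac - Bc * L)ᵀ * P * (Ac - Bc * L) + Lᵀ * R * L
        = Acᵀ * P * Ac - K'ᵀ * G * K' + (L - K')ᵀ * G * (L - K') := by
    intro L
    calc (Ac - Bc * L)ᵀ * P * (Ac - Bc * L) + Lᵀ * R * L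
        = Acᵀ * P * Ac - (Acᵀ * P * Bc) * L - Lᵀ * (Bcᵀ * P * Ac)
            + Lᵀ * (R + Bcᵀ * P * Bc) * L := by
          simp only [Matrix.transpose_sub, Matrix.transpose_mul, Matrix.mul_add,
            Matrix.add_mul, Matrix.sub_mul, Matrix.mul_sub, Matrix.mul_assoc]
          abel
      _ = Acᵀ * P * Ac - (K'ᵀ * G) * L - Lᵀ * (G * K') + Lᵀ * G * L := by
          rw [← hK'G, ← hGK'T, ← hGdef]
      _ = Acᵀ * P * Ac - K'ᵀ * G * K' + (L - K')ᵀ * G * (L - K') := by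
          simp only [Matrix.transpose_sub, Matrix.mul_add, Matrix.add_mul,
            Matrix.sub_mul, Matrix.mul_sub, Matrix.mul_assoc]
          abel
  have hsqK' : M'ᵀ * P * M' + K'ᵀ * R * K' = Acᵀ * P * Ac - K'ᵀ * G * K' := by
    have h := complete_square K'
    rw [← hM'ac] at h
    simpa [sub_self] using h
  have hsqK : Mᵀ * P * M + Kᵀ * R * K
      = Acᵀ * P * Ac - K'ᵀ * G * K' + (K - K')ᵀ * G * (K - K') := by
    have h := complete_square K
    rwa [← hMac] at h
  have hP0 : Mᵀ * P * M - P + (S + Kᵀ * R * K) = 0 := by rw [hP]; abel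
  have hpm' : M'ᵀ * P * M' - P = -(S + K'ᵀ * R * K' + (K - K')ᵀ * G * (K - K')) := by
    apply eq_neg_of_add_eq_zero_left
    have e : M'ᵀ * P * M' - P + (S + K'ᵀ * R * K' + (K - K')ᵀ * G * (K - K'))
        = (Mᵀ * P * M - P + (S + Kᵀ * R * K))
          + ((M'ᵀ * P * M' + K'ᵀ * R * K') - (Mᵀ * P * M + Kᵀ * R * K)
            + (K - K')ᵀ * G * (K - K')) := by abel
    rw [e, hP0, hsqK', hsqK]
    abel
  have hdiff : M'ᵀ * (P - P') * M' - (P - P') = -((K - K')ᵀ * G * (K - K')) := by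
    have expand : M'ᵀ * (P - P') * M' - (P - P')
        = (M'ᵀ * P * M' - P) - (M'ᵀ * P' * M' - P') := by
      simp only [Matrix.mul_sub, Matrix.sub_mul]
      abel
    rw [expand, hpm', hP']
    abel
  have hQ3 : (S + K'ᵀ * R * K').PosDef := hS.add_posSemidef (psd_conj K' R hR.posSemidef)
  have hQ2 : (S + K'ᵀ * R * K' + (K - K')ᵀ * G * (K - K')).PosDef :=
    hQ3.add_posSemidef (psd_conj (K - K') G hGpd.posSemidef)
  have hM'stable : SchurStable M' := schurStable_of_lyap hPpd hQ2 hpm'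
  exact ⟨lyap_posDef hM'stable hP' hQ3 hP'symm,
    lyap_posSemidef hM'stable hdiff (psd_conj (K - K') G hGpd.posSemidef)
      (hPsymm.sub hP'symm)⟩
end

section
/- Let A ∈ ℝ^{n×n}, B ∈ ℝ^{n×m}, K' ∈ ℝ^{m×n}, and let Q_tot ∈ ℝ^{n×n} be symmetric positive definite. Let c > 0, α > 0, c' = c + α, and δ ∈ (0, 1). Suppose P̃ is a symmetric matrix solving c²(A − BK')ᵀ P̃ (A − BK') − P̃ = −Q_tot, let P be a symmetric matrix with P̃ ⪯ P, and suppose the step-size condition ((c'/c)² − 1)(P − Q_tot) ⪯ (1 − δ) Q_tot holds. Then c'²(A − BK')ᵀ P̃ (A − BK') − P̃ ⪯ −δ Q_tot. -/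
open Matrix

/-- A nonnegative scalar multiple of a positive semidefinite real matrix is
positive semidefinite. -/
lemma psd_smul_aux {n : ℕ} {t : ℝ} (ht : 0 ≤ t) {M : Matrix (Fin n) (Fin n) ℝ}
    (hM : M.PosSemidef) : (t • M).PosSemidef := by
  refine ⟨?_, fun x => ?_⟩
  · unfold Matrix.IsHermitian
    rw [conjTranspose_smul, hM.1.eq]
    simp
  · have := hM.2 x
    exact (hM.smul ht).2 x

theorem stmt_11 {n m : ℕ} (A : Matrix (Fin n) (Fin n) ℝ) (B : Matrix (Fin n) (Fin m) ℝ)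
    (K' : Matrix (Fin m) (Fin n) ℝ) (Qtot : Matrix (Fin n) (Fin n) ℝ) (hQ : Qtot.PosDef)
    (c α δ : ℝ) (hc : 0 < c) (hα : 0 < α) (hδ : δ ∈ Set.Ioo (0 : ℝ) 1)
    (Pt P : Matrix (Fin n) (Fin n) ℝ) (hPt : Pt.IsSymm) (hP : P.IsSymm)
    (heq : (c ^ 2) • ((A - B * K')ᵀ * Pt * (A - B * K')) - Pt = -Qtot)
    (hle : (P - Pt).PosSemidef)
    (hstep : ((1 - δ) • Qtot - (((c + α) / c) ^ 2 - 1) • (P - Qtot)).PosSemidef) :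
    (-(δ • Qtot) -
      (((c + α) ^ 2) • ((A - B * K')ᵀ * Pt * (A - B * K')) - Pt)).PosSemidef := by
  set M := (A - B * K')ᵀ * Pt * (A - B * K') with hMdef
  set r : ℝ := ((c + α) / c) ^ 2 with hrdef
  have hc0 : c ≠ 0 := ne_of_gt hc
  have hM : (c ^ 2) • M = Pt - Qtot := by
    have h := sub_eq_iff_eq_add.mp heq
    rw [h]; abel
  have hrc : (c + α) ^ 2 = r * c ^ 2 := by
    rw [hrdef, div_pow, div_mul_cancel₀ _ (pow_ne_zero 2 hc0)]
  have hM2 : ((c + α) ^ 2) • M = r • (Pt - Qtot) := by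
    rw [hrc, ← smul_smul, hM]
  have hr1 : 1 ≤ r := by
    have h1 : 1 < (c + α) / c := by
      rw [lt_div_iff₀ hc]; linarith
    nlinarith
  have key : -(δ • Qtot) - (((c + α) ^ 2) • M - Pt)
      = ((1 - δ) • Qtot - (r - 1) • (P - Qtot)) + (r - 1) • (P - Pt) := by
    rw [hM2]; module
  rw [key]
  exact hstep.add (psd_smul_aux (by linarith) hle)
end

section
/- Let A ∈ ℝ^{n×n}, B ∈ ℝ^{n×m}, R ∈ ℝ^{m×m} symmetric positive definite, S ∈ ℝ^{n×n} symmetric positive definite, c > 0, and K ∈ ℝ^{m×n} such that c(A − BK) is Schur stable. Let P be the symmetric solution of c²(A − BK)ᵀ P (A − BK) − P = −(S + Kᵀ R K), and let K' = c²(R + c² Bᵀ P B)^{-1} Bᵀ P A be the improved gain. Then P ⪰ S + K'ᵀ R K'; in particular, the matrix P − S − K'ᵀ R K' is positive semidefinite. -/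
open Matrix Filter Topology
open scoped ENNReal NNReal

attribute [local instance] Matrix.linftyOpNormedRing Matrix.linftyOpNormedAlgebra

theorem aux_pow_tendsto_zero {A : Type*} [NormedRing A] [NormedAlgebra ℂ A] [CompleteSpace A]
    {a : A} (h : spectralRadius ℂ a < 1) :
    Tendsto (fun k : ℕ => a ^ k) atTop (𝓝 0) := by
  obtain ⟨r, hr1, hr2⟩ := exists_between h
  have hge := spectrum.pow_nnnorm_pow_one_div_tendsto_nhds_spectralRadius a
  have hev : ∀ᶠ k : ℕ in atTop, ((‖a ^ k‖₊ : ℝ≥0∞)) ^ ((1 : ℝ) / (k:ℕ)) < r :=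
    hge.eventually_lt_const hr1
  have hrtop : r ≠ ⊤ := (hr2.trans (by norm_num)).ne
  have hrlt1 : r.toReal < 1 := by
    have := (ENNReal.toReal_lt_toReal hrtop (by norm_num)).mpr hr2
    simpa using this
  have hr0 : (0:ℝ) ≤ r.toReal := ENNReal.toReal_nonneg
  have key : ∀ᶠ k : ℕ in atTop, ‖a ^ k‖ ≤ r.toReal ^ k := by
    filter_upwards [hev, eventually_ge_atTop 1] with k hk hk1
    have hk0 : (k : ℝ) ≠ 0 := by positivity
    have heq : ((‖a ^ k‖₊ : ℝ≥0∞)) = (((‖a ^ k‖₊ : ℝ≥0∞)) ^ ((1:ℝ)/k)) ^ (k : ℝ) := by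
      rw [← ENNReal.rpow_mul, one_div, inv_mul_cancel₀ hk0, ENNReal.rpow_one]
    have hle : ((‖a ^ k‖₊ : ℝ≥0∞)) ≤ r ^ (k:ℝ) := by
      rw [heq]
      exact ENNReal.rpow_le_rpow hk.le (by positivity)
    have h2 := (ENNReal.toReal_le_toReal (by simp)
      (by simp [ENNReal.rpow_eq_top_iff, hrtop])).mpr hle
    simpa [← ENNReal.toReal_rpow, ← Real.rpow_natCast] using h2
  exact squeeze_zero_norm' key (tendsto_pow_atTop_nhds_zero_of_lt_one hr0 hrlt1)

theorem aux_specRadius_lt_one {n : ℕ} {M : Matrix (Fin n) (Fin n) ℝ} (h : specRad M < 1) :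
    spectralRadius ℂ (M.map Complex.ofReal) < 1 := by
  set M' := M.map Complex.ofReal
  have hfin : (spectrum ℂ M').Finite := Matrix.finite_spectrum M'
  have hbdd : BddAbove ((fun μ : ℂ => ‖μ‖) '' spectrum ℂ M') :=
    (hfin.image _).bddAbove
  rw [spectralRadius]
  refine lt_of_le_of_lt (iSup₂_le fun k hk => ?_) (show ENNReal.ofReal ((specRad M + 1)/2) < 1 by
    rw [ENNReal.ofReal_lt_one]; linarith)
  have h1 : ‖k‖ ≤ specRad M := le_csSup hbdd ⟨k, hk, rfl⟩
  have : (‖k‖₊ : ℝ≥0∞) = ENNReal.ofReal ‖k‖ := by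
    rw [ENNReal.ofReal_eq_coe_nnreal (norm_nonneg k)]
    rfl
  rw [this]
  exact ENNReal.ofReal_le_ofReal (by linarith)

theorem aux_entry_le_norm {N : ℕ} (A : Matrix (Fin N) (Fin N) ℂ) (i j : Fin N) :
    ‖A i j‖ ≤ ‖A‖ := by
  rw [Matrix.linfty_opNorm_def]
  have h1 : ‖A i j‖₊ ≤ ∑ j' : Fin N, ‖A i j'‖₊ :=
    Finset.single_le_sum (f := fun j' => ‖A i j'‖₊) (fun _ _ => zero_le) (Finset.mem_univ j)
  have h2 : (∑ j' : Fin N, ‖A i j'‖₊) ≤ Finset.univ.sup fun i => ∑ j', ‖A i j'‖₊ :=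
    Finset.le_sup (f := fun i => ∑ j', ‖A i j'‖₊) (Finset.mem_univ i)
  exact_mod_cast h1.trans h2

theorem aux_map_pow {N : ℕ} (M : Matrix (Fin N) (Fin N) ℝ) (k : ℕ) :
    (M.map Complex.ofReal) ^ k = (M ^ k).map Complex.ofReal := by
  induction k with
  | zero => simp [Matrix.map_one]
  | succ k ih =>
    rw [pow_succ, pow_succ, ih]
    ext i j
    simp [Matrix.mul_apply, Matrix.map_apply]

theorem aux_psd_of_lyap {N : ℕ} {M Q P : Matrix (Fin N) (Fin N) ℝ} (hQ : Q.PosSemidef)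
    (hP : P.IsSymm) (hstab : specRad M < 1) (h : P = Mᵀ * P * M + Q) :
    P.PosSemidef := by
  have hpow := aux_pow_tendsto_zero (aux_specRadius_lt_one hstab)
  have hnorm : Tendsto (fun k : ℕ => ‖(M.map Complex.ofReal) ^ k‖) atTop (𝓝 0) := by
    simpa [Function.comp_def] using (continuous_norm.tendsto 0).comp hpow
  have hentry : ∀ i j, Tendsto (fun k : ℕ => (M ^ k) i j) atTop (𝓝 0) := by
    intro i j
    apply squeeze_zero_norm _ hnorm
    intro k
    have : |(M ^ k) i j| = ‖((M.map Complex.ofReal) ^ k) i j‖ := by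
      rw [aux_map_pow]
      simp [Matrix.map_apply, Complex.norm_real]
    rw [Real.norm_eq_abs, this]
    exact aux_entry_le_norm _ i j
  rw [Matrix.posSemidef_iff_dotProduct_mulVec]
  constructor
  · rwa [Matrix.IsHermitian, Matrix.conjTranspose_eq_transpose_of_trivial]
  intro x
  have step : ∀ z : Fin N → ℝ, (M *ᵥ z) ⬝ᵥ (P *ᵥ (M *ᵥ z)) ≤ z ⬝ᵥ (P *ᵥ z) := by
    intro z
    have : z ⬝ᵥ (P *ᵥ z) = (M *ᵥ z) ⬝ᵥ (P *ᵥ (M *ᵥ z)) + z ⬝ᵥ (Q *ᵥ z) := by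
      conv_lhs => rw [h]
      rw [Matrix.add_mulVec, dotProduct_add]
      congr 1
      rw [← Matrix.mulVec_mulVec, ← Matrix.mulVec_mulVec, Matrix.dotProduct_mulVec,
        Matrix.vecMul_transpose]
    have hq : 0 ≤ z ⬝ᵥ (Q *ᵥ z) := by simpa using hQ.dotProduct_mulVec_nonneg z
    linarith
  have mono : ∀ k : ℕ, ((M ^ k) *ᵥ x) ⬝ᵥ (P *ᵥ ((M ^ k) *ᵥ x)) ≤ x ⬝ᵥ (P *ᵥ x) := by
    intro k
    induction k with
    | zero => simp
    | succ k ih =>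
      have : (M ^ (k+1)) *ᵥ x = M *ᵥ ((M ^ k) *ᵥ x) := by
        rw [pow_succ', Matrix.mulVec_mulVec]
      rw [this]
      exact le_trans (step _) ih
  have hy : Tendsto (fun k : ℕ => (M ^ k) *ᵥ x) atTop (𝓝 0) := by
    rw [tendsto_pi_nhds]
    intro i
    have : ∀ k : ℕ, ((M ^ k) *ᵥ x) i = ∑ j, (M ^ k) i j * x j := fun k => rfl
    simp only [this, Pi.zero_apply]
    have := tendsto_finset_sum Finset.univ
      (fun j _ => (hentry i j).mul_const (x j))
    simpa using this
  have hcont : Continuous fun y : Fin N → ℝ => y ⬝ᵥ (P *ᵥ y) := by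
    simp only [dotProduct, Matrix.mulVec]
    fun_prop
  have hlim : Tendsto (fun k : ℕ => ((M ^ k) *ᵥ x) ⬝ᵥ (P *ᵥ ((M ^ k) *ᵥ x))) atTop (𝓝 0) := by
    have h2 := (hcont.tendsto 0).comp hy
    have h3 : (0 : Fin N → ℝ) ⬝ᵥ (P *ᵥ (0 : Fin N → ℝ)) = 0 := by simp
    rw [h3] at h2
    exact h2
  have h0 : (0:ℝ) ≤ x ⬝ᵥ (P *ᵥ x) := le_of_tendsto hlim (Eventually.of_forall mono)
  simpa using h0

theorem aux_psd_smul {N : ℕ} {X : Matrix (Fin N) (Fin N) ℝ} (hX : X.PosSemidef)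
    {r : ℝ} (hr : 0 ≤ r) : (r • X).PosSemidef := by
  rw [Matrix.posSemidef_iff_dotProduct_mulVec]
  constructor
  · have h1 := hX.1
    rw [Matrix.IsHermitian, Matrix.conjTranspose_eq_transpose_of_trivial] at h1 ⊢
    rw [Matrix.transpose_smul, h1]
  · intro x
    have h2 := hX.dotProduct_mulVec_nonneg x
    rw [Matrix.smul_mulVec, dotProduct_smul]
    exact smul_nonneg hr h2

theorem stmt_15 {n m : ℕ} (A : Matrix (Fin n) (Fin n) ℝ) (B : Matrix (Fin n) (Fin m) ℝ)
    (R : Matrix (Fin m) (Fin m) ℝ) (S : Matrix (Fin n) (Fin n) ℝ)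
    (c : ℝ) (K : Matrix (Fin m) (Fin n) ℝ)
    (hR : R.PosDef) (hS : S.PosDef) (hc : 0 < c)
    (hK : SchurStable (c • (A - B * K)))
    (P : Matrix (Fin n) (Fin n) ℝ) (hPsymm : P.IsSymm)
    (heq : (c ^ 2) • ((A - B * K)ᵀ * P * (A - B * K)) - P = -(S + Kᵀ * R * K))
    (K' : Matrix (Fin m) (Fin n) ℝ)
    (hK' : K' = (c ^ 2) • ((R + (c ^ 2) • (Bᵀ * P * B))⁻¹ * (Bᵀ * P * A))) :
    (P - (S + K'ᵀ * R * K')).PosSemidef := by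
  -- basic symmetry facts
  have hRsymm : Rᵀ = R := by
    have := hR.1
    rwa [Matrix.IsHermitian, Matrix.conjTranspose_eq_transpose_of_trivial] at this
  -- rearranged Lyapunov equation
  have hP2 : P = (c ^ 2) • ((A - B * K)ᵀ * P * (A - B * K)) + (S + Kᵀ * R * K) := by
    have h1 := eq_add_of_sub_eq heq
    rw [h1]
    abel
  -- Q := S + KᵀRK is PSD (indeed PosDef)
  have hKRK : (Kᵀ * R * K).PosSemidef := by
    have h := hR.posSemidef.conjTranspose_mul_mul_same K
    rwa [Matrix.conjTranspose_eq_transpose_of_trivial] at h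
  have hQpsd : (S + Kᵀ * R * K).PosSemidef := hS.posSemidef.add hKRK
  -- P is PSD via Lyapunov + Schur stability
  have hMform : (c • (A - B * K))ᵀ * P * (c • (A - B * K))
      = (c ^ 2) • ((A - B * K)ᵀ * P * (A - B * K)) := by
    rw [Matrix.transpose_smul, Matrix.smul_mul, Matrix.mul_smul, Matrix.smul_mul, smul_smul,
      pow_two]
  have hPpsd : P.PosSemidef := by
    refine aux_psd_of_lyap hQpsd hPsymm hK ?_
    rw [hMform, ← hP2]
  -- G := R + c² BᵀPB is positive definite
  set G : Matrix (Fin m) (Fin m) ℝ := R + (c ^ 2) • (Bᵀ * P * B) with hGdef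
  have hBPB : ((c ^ 2) • (Bᵀ * P * B)).PosSemidef := by
    have h := hPpsd.conjTranspose_mul_mul_same B
    rw [Matrix.conjTranspose_eq_transpose_of_trivial] at h
    exact aux_psd_smul h (by positivity)
  have hG : G.PosDef := hR.add_posSemidef hBPB
  have hGunit : IsUnit G.det := hG.det_pos.ne'.isUnit
  have hGinv : G * G⁻¹ = 1 := Matrix.mul_nonsing_inv G hGunit
  have hGsymm : Gᵀ = G := by
    have := hG.1
    rwa [Matrix.IsHermitian, Matrix.conjTranspose_eq_transpose_of_trivial] at this
  -- the gain relation
  have hGK' : (c ^ 2) • (Bᵀ * P * A) = G * K' := by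
    rw [hK', Matrix.mul_smul, ← Matrix.mul_assoc, hGinv, Matrix.one_mul]
  have hK'G : (c ^ 2) • (Aᵀ * P * B) = K'ᵀ * G := by
    have h := congrArg Matrix.transpose hGK'
    simp only [Matrix.transpose_smul, Matrix.transpose_mul, Matrix.transpose_transpose,
      hGsymm, hPsymm.eq, ← Matrix.mul_assoc] at h
    exact h
  -- completion of squares expansion
  have expand : ∀ L : Matrix (Fin m) (Fin n) ℝ,
      (c ^ 2) • ((A - B * L)ᵀ * P * (A - B * L)) + Lᵀ * R * L
      = (c ^ 2) • (Aᵀ * P * A) - Lᵀ * ((c ^ 2) • (Bᵀ * P * A))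
        - ((c ^ 2) • (Aᵀ * P * B)) * L + Lᵀ * G * L := by
    intro L
    simp only [hGdef, Matrix.transpose_sub, Matrix.transpose_mul, Matrix.sub_mul,
      Matrix.mul_sub, Matrix.add_mul, Matrix.mul_add, smul_sub, smul_add,
      Matrix.mul_smul, Matrix.smul_mul, Matrix.mul_assoc]
    module
  -- the key identity
  have main : P - (S + K'ᵀ * R * K')
      = (c ^ 2) • ((A - B * K')ᵀ * P * (A - B * K')) + (K - K')ᵀ * G * (K - K') := by
    calc P - (S + K'ᵀ * R * K')
        = ((c ^ 2) • ((A - B * K)ᵀ * P * (A - B * K)) + Kᵀ * R * K) - K'ᵀ * R * K' := by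
          conv_lhs => rw [hP2]
          abel
      _ = ((c ^ 2) • (Aᵀ * P * A) - Kᵀ * ((c ^ 2) • (Bᵀ * P * A))
            - ((c ^ 2) • (Aᵀ * P * B)) * K + Kᵀ * G * K) - K'ᵀ * R * K' := by
          rw [expand K]
      _ = ((c ^ 2) • (Aᵀ * P * A) - K'ᵀ * ((c ^ 2) • (Bᵀ * P * A))
            - ((c ^ 2) • (Aᵀ * P * B)) * K' + K'ᵀ * G * K') - K'ᵀ * R * K'
            + (K - K')ᵀ * G * (K - K') := by
          rw [hGK', hK'G]
          simp only [Matrix.transpose_sub, Matrix.sub_mul, Matrix.mul_sub, Matrix.mul_assoc]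
          abel
      _ = ((c ^ 2) • ((A - B * K')ᵀ * P * (A - B * K')) + K'ᵀ * R * K') - K'ᵀ * R * K'
            + (K - K')ᵀ * G * (K - K') := by
          rw [expand K']
      _ = (c ^ 2) • ((A - B * K')ᵀ * P * (A - B * K')) + (K - K')ᵀ * G * (K - K') := by
          abel
  rw [main]
  have part1 : ((c ^ 2) • ((A - B * K')ᵀ * P * (A - B * K'))).PosSemidef := by
    have h := hPpsd.conjTranspose_mul_mul_same (A - B * K')
    rw [Matrix.conjTranspose_eq_transpose_of_trivial] at h
    exact aux_psd_smul h (by positivity)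
  have part2 : ((K - K')ᵀ * G * (K - K')).PosSemidef := by
    have h := hG.posSemidef.conjTranspose_mul_mul_same (K - K')
    rwa [Matrix.conjTranspose_eq_transpose_of_trivial] at h
  exact part1.add part2
end
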